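/- arXiv:math/0302227 — 3 statements merged into one kernel-verified Lean document; each statement's English description precedes it below -/
import Mathlib

section
/- The function ρ♯(t,x) defined by ρ♯(t,x) = 4 if x − t·e₂ ∈ Q and ρ♯(t,x) = 3 otherwise, where Q ⊂ ℝ² is any measurable set, is a distributional (weak) solution of the conservation law ρ_t + div_x F(ρ) = 0, for F with F(3) = 0 and F(4) = e₂. -/
open scoped Classical

open MeasureTheory Set

/-- The shear homeomorphism `(t, (x₁, x₂)) ↦ (t, (x₁, x₂ + t))`. -/
def shearHomeo : Homeomorph (ℝ × (ℝ × ℝ)) (ℝ × (ℝ × ℝ)) where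
  toFun := fun p => (p.1, (p.2.1, p.2.2 + p.1))
  invFun := fun p => (p.1, (p.2.1, p.2.2 - p.1))
  left_inv := fun p => by simp
  right_inv := fun p => by simp
  continuous_toFun := by fun_prop
  continuous_invFun := by fun_prop

lemma shear_measurePreserving :
    MeasurePreserving (fun p : ℝ × (ℝ × ℝ) => (p.1, (p.2.1, p.2.2 + p.1)))
      (volume : Measure (ℝ × (ℝ × ℝ))) volume := by
  rw [show (volume : Measure (ℝ × (ℝ × ℝ))) = (volume : Measure ℝ).prod volume from rfl]
  exact (MeasurePreserving.id volume).skew_product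
    (g := fun t (x : ℝ × ℝ) => (x.1, x.2 + t)) (by fun_prop)
    (Filter.Eventually.of_forall fun t => by
      rw [show (volume : Measure (ℝ × ℝ)) = (volume : Measure ℝ).prod volume from rfl]
      exact ((MeasurePreserving.id volume).prod (measurePreserving_add_right volume t)).map_eq)

/-- Integral over a line of a directional derivative of a compactly supported function is 0. -/
lemma line_integral_zero (φ : ℝ × (ℝ × ℝ) → ℝ) (hφ : ContDiff ℝ (⊤ : ℕ∞) φ)
    (h2φ : HasCompactSupport φ) (x1 y c : ℝ) :
    ∫ t : ℝ, fderiv ℝ φ (t, (x1, y + c * t)) (1, (0, c)) = 0 := by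
  set ψ : ℝ → ℝ := fun t => φ (t, (x1, y + c * t)) with hψ
  have hγ : ∀ t : ℝ, HasDerivAt (fun t : ℝ => ((t, (x1, y + c * t)) : ℝ × (ℝ × ℝ)))
      ((1 : ℝ), ((0 : ℝ), c)) t := by
    intro t
    have h2 : HasDerivAt (fun t : ℝ => y + c * t) c t := by
      simpa using ((hasDerivAt_id t).const_mul c).const_add y
    exact HasDerivAt.prodMk (hasDerivAt_id t) (HasDerivAt.prodMk (hasDerivAt_const t x1) h2)
  have hψd : ∀ t : ℝ, HasDerivAt ψ (fderiv ℝ φ (t, (x1, y + c * t)) (1, (0, c))) t := by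
    intro t
    exact ((hφ.differentiable (by simp) _).hasFDerivAt).comp_hasDerivAt t (hγ t)
  have hψc : ContDiff ℝ 1 ψ := (hφ.comp (by fun_prop)).of_le (by simp)
  have hψs : HasCompactSupport ψ := by
    apply HasCompactSupport.intro (h2φ.image continuous_fst)
    intro t ht
    by_contra h
    exact ht ⟨(t, (x1, y + c * t)), subset_tsupport φ h, rfl⟩
  have heq : (fun t : ℝ => fderiv ℝ φ (t, (x1, y + c * t)) (1, (0, c))) = deriv ψ :=
    funext fun t => ((hψd t).deriv).symm
  rw [heq]
  have hint : Integrable (deriv ψ) :=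
    (hψc.continuous_deriv le_rfl).integrable_of_hasCompactSupport hψs.deriv
  rw [← intervalIntegral.integral_Iic_add_Ioi (b := 0) hint.integrableOn hint.integrableOn,
    HasCompactSupport.integral_Iic_deriv_eq hψc hψs 0,
    HasCompactSupport.integral_Ioi_deriv_eq hψc hψs 0]
  ring

theorem stmt_5 (Q : Set (ℝ × ℝ)) (hQ : MeasurableSet Q)
    (F : ℝ → ℝ × ℝ) (hF3 : F 3 = 0) (hF4 : F 4 = (0, 1))
    (ρ : ℝ → ℝ × ℝ → ℝ)
    (hρ : ∀ t x, ρ t x = if (x.1, x.2 - t) ∈ Q then 4 else 3) :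
    ∀ φ : ℝ × (ℝ × ℝ) → ℝ, ContDiff ℝ (⊤ : ℕ∞) φ → HasCompactSupport φ →
      (Function.support φ ⊆ Ioi (0:ℝ) ×ˢ univ) →
      ∫ p : ℝ × (ℝ × ℝ),
        (ρ p.1 p.2 * fderiv ℝ φ p (1, (0, 0))
          + fderiv ℝ φ p (0, F (ρ p.1 p.2))) = 0 := by
  intro φ hφ h2φ _
  -- continuity and integrability of directional derivatives
  have hcont : ∀ v : ℝ × (ℝ × ℝ), Continuous fun p => fderiv ℝ φ p v := fun v =>
    (hφ.continuous_fderiv (by simp)).clm_apply continuous_const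
  have hintv : ∀ v : ℝ × (ℝ × ℝ), Integrable fun p => fderiv ℝ φ p v := fun v =>
    (hcont v).integrable_of_hasCompactSupport (h2φ.fderiv_apply ℝ v)
  set S : Set (ℝ × (ℝ × ℝ)) := {p | (p.2.1, p.2.2 - p.1) ∈ Q} with hS
  have hSm : MeasurableSet S := by
    have : Measurable fun p : ℝ × (ℝ × ℝ) => (p.2.1, p.2.2 - p.1) := by fun_prop
    exact this hQ
  set g1 : ℝ × (ℝ × ℝ) → ℝ := fun p => 3 * fderiv ℝ φ p (1, (0, 0)) with hg1
  set g2 : ℝ × (ℝ × ℝ) → ℝ :=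
    S.indicator (fun p => fderiv ℝ φ p (1, (0, 1))) with hg2
  have hint1 : Integrable g1 := (hintv (1, (0, 0))).const_mul 3
  have hint2 : Integrable g2 := (hintv (1, (0, 1))).indicator hSm
  have hsplit : (fun p : ℝ × (ℝ × ℝ) =>
      ρ p.1 p.2 * fderiv ℝ φ p (1, (0, 0)) + fderiv ℝ φ p (0, F (ρ p.1 p.2)))
      = fun p => g1 p + g2 p := by
    funext p
    rw [hρ]
    by_cases hp : (p.2.1, p.2.2 - p.1) ∈ Q
    · have hmem : p ∈ S := hp
      have hadd := (fderiv ℝ φ p).map_add ((1 : ℝ), ((0 : ℝ), (0 : ℝ)))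
        ((0 : ℝ), ((0 : ℝ), (1 : ℝ)))
      simp only [Prod.mk_add_mk, add_zero, zero_add] at hadd
      simp only [if_pos hp, hF4, hg1, hg2, indicator_of_mem hmem, hadd]
      ring
    · have hmem : p ∉ S := hp
      simp only [if_neg hp, hF3, hg1, hg2, indicator_of_notMem hmem, Prod.mk_zero_zero, map_zero]
  rw [hsplit, integral_add hint1 hint2]
  have h1 : ∫ p : ℝ × (ℝ × ℝ), g1 p = 0 := by
    rw [show (volume : Measure (ℝ × (ℝ × ℝ))) = (volume : Measure ℝ).prod volume from rfl] at hint1 ⊢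
    rw [integral_prod_symm _ hint1]
    have : ∀ x : ℝ × ℝ, ∫ t : ℝ, g1 (t, x) = 0 := by
      intro x
      rw [hg1]
      simp only
      rw [MeasureTheory.integral_const_mul]
      have := line_integral_zero φ hφ h2φ x.1 x.2 0
      simpa using this
    simp [this]
  have h2 : ∫ p : ℝ × (ℝ × ℝ), g2 p = 0 := by
    have hemb : MeasurableEmbedding
        (fun p : ℝ × (ℝ × ℝ) => (p.1, (p.2.1, p.2.2 + p.1))) :=
      shearHomeo.measurableEmbedding
    rw [← shear_measurePreserving.integral_comp hemb g2]
    have hintc : Integrable (fun p : ℝ × (ℝ × ℝ) => g2 (p.1, (p.2.1, p.2.2 + p.1))) :=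
      (shear_measurePreserving.integrable_comp_emb hemb).mpr hint2
    rw [show (volume : Measure (ℝ × (ℝ × ℝ))) = (volume : Measure ℝ).prod volume from rfl] at hintc ⊢
    rw [integral_prod_symm _ hintc]
    have : ∀ x : ℝ × ℝ, ∫ t : ℝ, g2 (t, (x.1, x.2 + t)) = 0 := by
      intro x
      by_cases hx : x ∈ Q
      · have : ∀ t : ℝ, g2 (t, (x.1, x.2 + t)) =
            fderiv ℝ φ (t, (x.1, x.2 + 1 * t)) (1, (0, 1)) := by
          intro t
          rw [hg2, indicator_of_mem]
          · norm_num
          · show (x.1, x.2 + t - t) ∈ Q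
            simpa using hx
        simp_rw [this]
        exact line_integral_zero φ hφ h2φ x.1 x.2 1
      · have : ∀ t : ℝ, g2 (t, (x.1, x.2 + t)) = 0 := by
          intro t
          rw [hg2, indicator_of_notMem]
          show (x.1, x.2 + t - t) ∉ Q
          simpa using hx
        simp [this]
    simp [this]
  rw [h1, h2, add_zero]
end

section
/- The function ρ♭(t,x) defined by ρ♭(t,x) = 2 if x − t·e₁ ∈ Q and ρ♭(t,x) = 3 otherwise, where Q ⊂ ℝ² is any measurable set, is a distributional solution of ρ_t + div_x F(ρ) = 0, for F with F(2) = −e₁ and F(3) = 0. -/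
open scoped Classical

open MeasureTheory Set

/-- Integral over ℝ of the derivative of a compactly supported C¹ function is zero. -/
lemma aux_integral_deriv_zero {f : ℝ → ℝ} (hf : ContDiff ℝ 1 f) (h2f : HasCompactSupport f) :
    ∫ x, deriv f x = 0 := by
  have hint : Integrable (deriv f) :=
    (hf.continuous_deriv le_rfl).integrable_of_hasCompactSupport h2f.deriv
  rw [← intervalIntegral.integral_Iic_add_Ioi (b := (0:ℝ)) hint.integrableOn hint.integrableOn,
    HasCompactSupport.integral_Iic_deriv_eq hf h2f 0,
    HasCompactSupport.integral_Ioi_deriv_eq hf h2f 0]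
  ring

/-- The shear map as a measurable equivalence. -/
noncomputable def shearE : (ℝ × (ℝ × ℝ)) ≃ᵐ (ℝ × (ℝ × ℝ)) :=
{ toFun := fun p => (p.1, (p.1, 0) + p.2)
  invFun := fun p => (p.1, p.2 - (p.1, 0))
  left_inv := fun p => by simp
  right_inv := fun p => by simp
  measurable_toFun :=
    measurable_fst.prodMk ((measurable_fst.prodMk measurable_const).add measurable_snd)
  measurable_invFun :=
    measurable_fst.prodMk (measurable_snd.sub (measurable_fst.prodMk measurable_const)) }

lemma shearE_mp : MeasurePreserving (shearE : (ℝ × (ℝ × ℝ)) ≃ᵐ (ℝ × (ℝ × ℝ)))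
    volume volume := by
  rw [show (volume : Measure (ℝ × (ℝ × ℝ))) = (volume : Measure ℝ).prod volume from
    Measure.volume_eq_prod _ _]
  have : MeasurePreserving (fun p : ℝ × (ℝ × ℝ) => (p.1, ((p.1, 0) : ℝ × ℝ) + p.2))
      ((volume : Measure ℝ).prod volume) ((volume : Measure ℝ).prod volume) :=
    (MeasurePreserving.id volume).skew_product
      (((measurable_fst.prodMk measurable_const).add measurable_snd))
      (Filter.Eventually.of_forall fun t =>
        (measurePreserving_add_left volume ((t, 0) : ℝ × ℝ)).map_eq)
  exact this

theorem stmt_6 (Q : Set (ℝ × ℝ)) (hQ : MeasurableSet Q)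
    (F : ℝ → ℝ × ℝ) (hF2 : F 2 = (-1, 0)) (hF3 : F 3 = 0)
    (ρ : ℝ → ℝ × ℝ → ℝ)
    (hρ : ∀ t x, ρ t x = if (x.1 - t, x.2) ∈ Q then 2 else 3) :
    ∀ φ : ℝ × (ℝ × ℝ) → ℝ, ContDiff ℝ (⊤ : ℕ∞) φ → HasCompactSupport φ →
      (Function.support φ ⊆ Ioi (0:ℝ) ×ˢ univ) →
      ∫ p : ℝ × (ℝ × ℝ),
        (ρ p.1 p.2 * fderiv ℝ φ p (1, (0, 0))
          + fderiv ℝ φ p (0, F (ρ p.1 p.2))) = 0 := by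
  intro φ hφ hφc _
  have hφd : Differentiable ℝ φ := hφ.differentiable (by simp)
  set A : ℝ × (ℝ × ℝ) → ℝ := fun p => fderiv ℝ φ p (1, (0, 0)) with hAdef
  set V : ℝ × (ℝ × ℝ) → ℝ := fun p => fderiv ℝ φ p (1, (1, 0)) with hVdef
  have hfc : Continuous (fderiv ℝ φ) := (hφ.fderiv_right (m := (⊤ : ℕ∞)) (by simp)).continuous
  have hAc : Continuous A := hfc.clm_apply continuous_const
  have hVc : Continuous V := hfc.clm_apply continuous_const
  have hAh : HasCompactSupport A := hφc.fderiv_apply ℝ _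
  have hVh : HasCompactSupport V := hφc.fderiv_apply ℝ _
  have hAi : Integrable A := hAc.integrable_of_hasCompactSupport hAh
  have hVi : Integrable V := hVc.integrable_of_hasCompactSupport hVh
  set S : Set (ℝ × (ℝ × ℝ)) := {p | (p.2.1 - p.1, p.2.2) ∈ Q} with hSdef
  have hSm : MeasurableSet S := by
    have : Measurable (fun p : ℝ × (ℝ × ℝ) => (p.2.1 - p.1, p.2.2)) :=
      ((measurable_fst.comp measurable_snd).sub measurable_fst).prodMk
        (measurable_snd.comp measurable_snd)
    exact this hQ
  -- rewrite the integrand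
  have key : ∀ p : ℝ × (ℝ × ℝ),
      ρ p.1 p.2 * fderiv ℝ φ p (1, (0, 0)) + fderiv ℝ φ p (0, F (ρ p.1 p.2))
        = 3 * A p - S.indicator V p := by
    intro p
    by_cases h : (p.2.1 - p.1, p.2.2) ∈ Q
    · have hmem : p ∈ S := h
      rw [hρ, if_pos h, hF2, indicator_of_mem hmem]
      have hv : ((0:ℝ), ((-1:ℝ), (0:ℝ))) = ((1:ℝ), ((0:ℝ), (0:ℝ))) - (1, (1, 0)) := by
        norm_num
      rw [hv, map_sub]
      show (2:ℝ) * A p + (A p - V p) = 3 * A p - V p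
      ring
    · have hmem : p ∉ S := h
      rw [hρ, if_neg h, hF3, indicator_of_notMem hmem]
      have : ((0:ℝ), (0 : ℝ × ℝ)) = (0 : ℝ × (ℝ × ℝ)) := rfl
      rw [this, map_zero]
      show (3:ℝ) * A p + 0 = 3 * A p - 0
      ring
  rw [integral_congr_ae (Filter.Eventually.of_forall key)]
  have hIndInt : Integrable (S.indicator V) := hVi.indicator hSm
  rw [integral_sub ((hAi.const_mul 3)) hIndInt, integral_const_mul 3 A]
  -- first claim : ∫ A = 0
  have hA0 : ∫ p, A p = 0 := by
    have hAi' : Integrable A ((volume : Measure ℝ).prod volume) := by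
      rwa [← Measure.volume_eq_prod]
    calc ∫ p, A p = ∫ p, A p ∂((volume : Measure ℝ).prod volume) := by rw [← Measure.volume_eq_prod]
      _ = ∫ x : ℝ × ℝ, ∫ t : ℝ, A (t, x) := integral_prod_symm A hAi'
      _ = 0 := by
        have : ∀ x : ℝ × ℝ, ∫ t : ℝ, A (t, x) = 0 := by
          intro x
          have hderiv : ∀ t : ℝ, HasDerivAt (fun t => φ (t, x)) (A (t, x)) t := by
            intro t
            have hL : HasDerivAt (fun t : ℝ => ((t, x) : ℝ × (ℝ × ℝ)))
                ((1, (0, 0)) : ℝ × (ℝ × ℝ)) t :=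
              (hasDerivAt_id t).prodMk (hasDerivAt_const t x)
            exact (hφd (t, x)).hasFDerivAt.comp_hasDerivAt t hL
          have hcs : HasCompactSupport (fun t => φ (t, x)) := by
            apply HasCompactSupport.intro (hφc.image continuous_fst)
            intro t ht
            by_contra h
            exact ht ⟨(t, x), subset_tsupport φ h, rfl⟩
          have hcd : ContDiff ℝ 1 (fun t => φ (t, x)) :=
            (hφ.comp (contDiff_id.prodMk contDiff_const)).of_le (by simp)
          have := aux_integral_deriv_zero hcd hcs
          rw [← this]
          exact integral_congr_ae (Filter.Eventually.of_forall fun t => ((hderiv t).deriv).symm)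
        simp [this]
  -- second claim : ∫ indicator = 0
  have hInd0 : ∫ p, S.indicator V p = 0 := by
    have hcomp : ∫ p, S.indicator V p = ∫ p, S.indicator V (shearE p) :=
      (shearE_mp.integral_comp shearE.measurableEmbedding _).symm
    rw [hcomp]
    have hIc : Integrable (fun p => S.indicator V (shearE p)) volume :=
      (shearE_mp.integrable_comp_emb shearE.measurableEmbedding).mpr hIndInt
    have hIc' : Integrable (fun p => S.indicator V (shearE p))
        ((volume : Measure ℝ).prod volume) := by rwa [← Measure.volume_eq_prod]
    calc ∫ p, S.indicator V (shearE p)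
        = ∫ p, S.indicator V (shearE p) ∂((volume : Measure ℝ).prod volume) := by
          rw [← Measure.volume_eq_prod]
      _ = ∫ y : ℝ × ℝ, ∫ t : ℝ, S.indicator V (shearE (t, y)) := integral_prod_symm _ hIc'
      _ = 0 := by
        have : ∀ y : ℝ × ℝ, ∫ t : ℝ, S.indicator V (shearE (t, y)) = 0 := by
          intro y
          have hmemQ : ∀ t : ℝ, (shearE (t, y) ∈ S) ↔ y ∈ Q := by
            intro t
            show ((t + y.1 - t, 0 + y.2) ∈ Q) ↔ y ∈ Q
            norm_num
          by_cases hy : y ∈ Q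
          · have heq : ∀ t : ℝ, S.indicator V (shearE (t, y)) = V (t, (t, 0) + y) := by
              intro t
              rw [indicator_of_mem ((hmemQ t).mpr hy)]
              rfl
            rw [integral_congr_ae (Filter.Eventually.of_forall heq)]
            -- ∫ t, V (t, (t,0)+y) = 0
            have hderiv : ∀ t : ℝ, HasDerivAt (fun t => φ (t, (t, 0) + y))
                (V (t, (t, 0) + y)) t := by
              intro t
              have h1 : HasDerivAt (fun t : ℝ => t + y.1) 1 t :=
                (hasDerivAt_id t).add_const _
              have h2 : HasDerivAt (fun _ : ℝ => (0:ℝ) + y.2) 0 t := hasDerivAt_const t _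
              have hin : HasDerivAt (fun t : ℝ => ((t, 0) : ℝ × ℝ) + y) ((1, 0) : ℝ × ℝ) t :=
                h1.prodMk h2
              have hL : HasDerivAt (fun t : ℝ => ((t, (t, 0) + y) : ℝ × (ℝ × ℝ)))
                  ((1, (1, 0)) : ℝ × (ℝ × ℝ)) t := (hasDerivAt_id t).prodMk hin
              exact (hφd _).hasFDerivAt.comp_hasDerivAt t hL
            have hcs : HasCompactSupport (fun t => φ (t, (t, 0) + y)) := by
              apply HasCompactSupport.intro (hφc.image continuous_fst)
              intro t ht
              by_contra h
              exact ht ⟨(t, (t, 0) + y), subset_tsupport φ h, rfl⟩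
            have hcd : ContDiff ℝ 1 (fun t => φ (t, (t, 0) + y)) := by
              apply (hφ.comp _).of_le (by simp)
              exact contDiff_id.prodMk ((contDiff_id.prodMk contDiff_const).add contDiff_const)
            exact (integral_congr_ae
              (Filter.Eventually.of_forall fun t => ((hderiv t).deriv).symm)).trans
              (aux_integral_deriv_zero hcd hcs)
          · have heq : ∀ t : ℝ, S.indicator V (shearE (t, y)) = 0 := fun t =>
              indicator_of_notMem (fun h => hy ((hmemQ t).mp h)) _
            simp [heq]
        simp [this]
  rw [hA0, hInd0]
  ring
end

section
/- Each of the maps Φ♯_k, Φ♭_k, Φ̃♯_k defined by Φ♯_k(y) = y + 2^{−k}e₂ if α_k(y₁) = 0 else y; Φ♭_k(y) = y − 2^{−k}e₁ if β_k(y₂) ≠ β_{k+1}(y₂) else y; Φ̃♯_k(y) = y + 2^{−k−1}e₂ if α_k(y₁) = 0 else y, preserves Lebesgue measure on ℝ² (up to null sets), and hence so does the composition Ψ_k = Φ̃♯_k ∘ Φ♭_k ∘ Φ♯_k. -/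
open scoped Classical symmDiff

open MeasureTheory Set

/-- The `k`-th binary digit of the fractional part of `x`
(non-terminating-in-1's convention). -/
noncomputable def dig (k : ℕ) (x : ℝ) : ℤ := ⌊Int.fract x * 2 ^ k⌋ % 2

noncomputable def Φsharp (k : ℕ) (y : ℝ × ℝ) : ℝ × ℝ :=
  if dig k y.1 = 0 then y + ((0 : ℝ), (2 : ℝ) ^ (-(k : ℤ))) else y

noncomputable def Φflat (k : ℕ) (y : ℝ × ℝ) : ℝ × ℝ :=
  if dig k y.2 ≠ dig (k + 1) y.2 then y - ((2 : ℝ) ^ (-(k : ℤ)), (0 : ℝ)) else y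

noncomputable def Φtsharp (k : ℕ) (y : ℝ × ℝ) : ℝ × ℝ :=
  if dig k y.1 = 0 then y + ((0 : ℝ), (2 : ℝ) ^ (-(k : ℤ) - 1)) else y

noncomputable def Ψ (k : ℕ) : ℝ × ℝ → ℝ × ℝ :=
  Φtsharp k ∘ Φflat k ∘ Φsharp k

/-! Each map translates by a fixed vector `c` on a measurable set `S` and is the identity off `S`,
and `S` is invariant under translation by `c`: membership depends only on the coordinate that `c`
does not move. Splitting a preimage `f ⁻¹' A` along `S` and using translation invariance of
Lebesgue measure on the part inside `S` gives `μ (f ⁻¹' A) = μ (A ∩ S) + μ (A \ S) = μ A`. -/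

theorem MeasureTheory.MeasurePreserving.ite_add_const {G : Type*} [MeasurableSpace G]
    [Add G] [MeasurableAdd G] (μ : Measure G) [μ.IsAddRightInvariant] {p : G → Prop}
    [DecidablePred p] (hp : MeasurableSet {y | p y}) (c : G) (hpc : ∀ y, p (y + c) ↔ p y) :
    MeasurePreserving (fun y => if p y then y + c else y) μ μ := by
  set S := {y | p y}
  have hf : Measurable (fun y => if p y then y + c else y) :=
    Measurable.ite hp (measurable_add_const c) measurable_id
  refine ⟨hf, Measure.ext fun A hA => ?_⟩
  have hin : (fun y => if p y then y + c else y) ⁻¹' A ∩ S = (· + c) ⁻¹' (A ∩ S) := by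
    ext y; by_cases hy : p y <;> simp [S, hy, hpc]
  have hout : (fun y => if p y then y + c else y) ⁻¹' A \ S = A \ S := by
    ext y; by_cases hy : p y <;> simp [S, hy]
  rw [Measure.map_apply hf hA, ← measure_inter_add_sdiff _ hp, hin, hout,
    (measurePreserving_add_right μ c).measure_preimage (hA.inter hp).nullMeasurableSet,
    measure_inter_add_sdiff _ hp]

theorem measurable_dig (k : ℕ) : Measurable (dig k) :=
  (measurable_from_top (f := (· % 2 : ℤ → ℤ))).comp (measurable_fract.mul_const _).floor

theorem measurableSet_dig_fst_eq_zero (k : ℕ) : MeasurableSet {y : ℝ × ℝ | dig k y.1 = 0} :=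
  measurableSet_eq_fun ((measurable_dig k).comp measurable_fst) measurable_const

theorem measurePreserving_Φsharp (k : ℕ) : MeasurePreserving (Φsharp k) volume volume :=
  .ite_add_const volume (measurableSet_dig_fst_eq_zero k) _ fun y => by simp

theorem measurePreserving_Φtsharp (k : ℕ) : MeasurePreserving (Φtsharp k) volume volume :=
  .ite_add_const volume (measurableSet_dig_fst_eq_zero k) _ fun y => by simp

theorem measurePreserving_Φflat (k : ℕ) : MeasurePreserving (Φflat k) volume volume := by
  have hS : MeasurableSet {y : ℝ × ℝ | dig k y.2 ≠ dig (k + 1) y.2} :=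
    (measurableSet_eq_fun ((measurable_dig k).comp measurable_snd)
      ((measurable_dig (k + 1)).comp measurable_snd)).compl
  unfold Φflat
  simp_rw [sub_eq_add_neg]
  exact .ite_add_const volume hS _ fun y => by simp

theorem stmt_11 (k : ℕ) :
    MeasurePreserving (Φsharp k) (volume : Measure (ℝ × ℝ)) volume ∧
    MeasurePreserving (Φflat k) (volume : Measure (ℝ × ℝ)) volume ∧
    MeasurePreserving (Φtsharp k) (volume : Measure (ℝ × ℝ)) volume ∧
    MeasurePreserving (Ψ k) (volume : Measure (ℝ × ℝ)) volume :=
  ⟨measurePreserving_Φsharp k, measurePreserving_Φflat k, measurePreserving_Φtsharp k,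
    (measurePreserving_Φtsharp k).comp (measurePreserving_Φflat k) |>.comp
      (measurePreserving_Φsharp k)⟩
end
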